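/- Suppose c : 𝓗 → ℝ satisfies E⁻(K−H) ≤ c(K) − c(H) ≤ E⁺(K−H) for all H, K ∈ 𝓗, and suppose for every ε > 0 there exists K_ε ∈ 𝓗 with −ε ≤ K_ε ≤ 0 pointwise and c(K_ε) = ε. Then E⁻(H) ≤ c(H) ≤ E⁺(H) for every H ∈ 𝓗. -/

import Mathlib

open intervalIntegral Set

/-- `Eplus F = -∫₀¹ min_{x∈U} F(x,t) dt` -/
noncomputable def Eplus {U : Type*} [TopologicalSpace U] (F : U → ℝ → ℝ) : ℝ :=
  -∫ t in (0:ℝ)..1, sInf (Set.range fun x : U => F x t)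

/-- `Eminus F = -∫₀¹ max_{x∈U} F(x,t) dt` -/
noncomputable def Eminus {U : Type*} [TopologicalSpace U] (F : U → ℝ → ℝ) : ℝ :=
  -∫ t in (0:ℝ)..1, sSup (Set.range fun x : U => F x t)

/-!
Test the spectral-type inequality `E⁻(K - H) ≤ c K - c H ≤ E⁺(K - H)` against `K = K_ε`, with
the roles of `H` and `K` swapped. Since `-ε ≤ K_ε ≤ 0`, we have `H ≤ H - K_ε ≤ H + ε`, and `E⁺`,
`E⁻` are antitone, with `E⁻(H + ε) = E⁻(H) - ε`. Hence `E⁻(H) - ε ≤ c H - ε` and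
`c H - ε ≤ E⁺(H)`; letting `ε → 0` gives the claim.
-/

section

variable {U : Type*} [TopologicalSpace U] [CompactSpace U] {F G : U → ℝ → ℝ}

theorem continuous_sSup_range_apply (hF : Continuous (Function.uncurry F)) :
    Continuous fun t => sSup (range fun x => F x t) := by
  simpa only [image_univ] using
    isCompact_univ.continuous_sSup (f := fun t x => F x t) (hF.comp continuous_swap)

theorem continuous_sInf_range_apply (hF : Continuous (Function.uncurry F)) :
    Continuous fun t => sInf (range fun x => F x t) := by
  simpa only [image_univ] using
    isCompact_univ.continuous_sInf (f := fun t x => F x t) (hF.comp continuous_swap)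

theorem bddAbove_range_apply (hF : Continuous (Function.uncurry F)) (t : ℝ) :
    BddAbove (range fun x => F x t) :=
  (isCompact_range (hF.comp (continuous_id.prodMk continuous_const))).bddAbove

theorem bddBelow_range_apply (hF : Continuous (Function.uncurry F)) (t : ℝ) :
    BddBelow (range fun x => F x t) :=
  (isCompact_range (hF.comp (continuous_id.prodMk continuous_const))).bddBelow

variable [Nonempty U]

theorem Eminus_le_of_le (hF : Continuous (Function.uncurry F))
    (hG : Continuous (Function.uncurry G)) (h : ∀ x, ∀ t ∈ Icc (0:ℝ) 1, F x t ≤ G x t) :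
    Eminus G ≤ Eminus F := by
  refine neg_le_neg (integral_mono_on zero_le_one
    ((continuous_sSup_range_apply hF).intervalIntegrable 0 1)
    ((continuous_sSup_range_apply hG).intervalIntegrable 0 1) fun t ht => ?_)
  exact csSup_le (range_nonempty _) <| forall_mem_range.2 fun x =>
    (h x t ht).trans (le_csSup (bddAbove_range_apply hG t) (mem_range_self x))

theorem Eplus_le_of_le (hF : Continuous (Function.uncurry F))
    (hG : Continuous (Function.uncurry G)) (h : ∀ x, ∀ t ∈ Icc (0:ℝ) 1, F x t ≤ G x t) :
    Eplus G ≤ Eplus F := by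
  refine neg_le_neg (integral_mono_on zero_le_one
    ((continuous_sInf_range_apply hF).intervalIntegrable 0 1)
    ((continuous_sInf_range_apply hG).intervalIntegrable 0 1) fun t ht => ?_)
  exact le_csInf (range_nonempty _) <| forall_mem_range.2 fun x =>
    (csInf_le (bddBelow_range_apply hF t) (mem_range_self x)).trans (h x t ht)

theorem Eminus_add_const (hF : Continuous (Function.uncurry F)) (a : ℝ) :
    Eminus (fun x t => F x t + a) = Eminus F - a := by
  have hsSup : ∀ t, sSup (range fun x => F x t + a) = sSup (range fun x => F x t) + a :=
    fun t => (ciSup_add (bddAbove_range_apply hF t) a).symm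
  simp only [Eminus, hsSup,
    integral_add ((continuous_sSup_range_apply hF).intervalIntegrable 0 1) intervalIntegrable_const]
  simp only [integral_const, sub_zero, one_smul]
  ring

end

theorem stmt3 {U : Type*} [TopologicalSpace U] [CompactSpace U] [Nonempty U]
    (𝓗 : Set (U → ℝ → ℝ))
    (hcont : ∀ H ∈ 𝓗, Continuous fun z : U × ℝ => H z.1 z.2)
    (c : (U → ℝ → ℝ) → ℝ)
    (hc : ∀ H ∈ 𝓗, ∀ K ∈ 𝓗,
      Eminus (fun x t => K x t - H x t) ≤ c K - c H ∧
      c K - c H ≤ Eplus (fun x t => K x t - H x t))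
    (hK : ∀ ε : ℝ, 0 < ε → ∃ Kε ∈ 𝓗,
      (∀ (x : U), ∀ t ∈ Set.Icc (0:ℝ) 1, -ε ≤ Kε x t ∧ Kε x t ≤ 0) ∧ c Kε = ε) :
    ∀ H ∈ 𝓗, Eminus H ≤ c H ∧ c H ≤ Eplus H := by
  intro H hH
  have hHc : Continuous (Function.uncurry H) := hcont H hH
  have bounds : ∀ ε > 0, Eminus H ≤ c H ∧ c H ≤ Eplus H + ε := by
    intro ε hε
    obtain ⟨K, hK𝓗, hKbd, hcK⟩ := hK ε hε
    have hHKc : Continuous (Function.uncurry fun x t => H x t - K x t) :=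
      hHc.sub (hcont K hK𝓗)
    obtain ⟨hlow, hup⟩ := hc K hK𝓗 H hH
    have hEminus : Eminus H - ε ≤ Eminus (fun x t => H x t - K x t) := by
      rw [← Eminus_add_const hHc]
      exact Eminus_le_of_le hHKc (hHc.add continuous_const) fun x t ht => by
        linarith [(hKbd x t ht).1]
    have hEplus : Eplus (fun x t => H x t - K x t) ≤ Eplus H :=
      Eplus_le_of_le hHc hHKc fun x t ht => by linarith [(hKbd x t ht).2]
    constructor <;> linarith
  exact ⟨(bounds 1 one_pos).1, le_of_forall_pos_le_add fun ε hε => (bounds ε hε).2⟩
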